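/- For $p\geq 2$ an integer, the $(p-1)\times(p-1)$ matrix with entries $M_{a,b} = \frac{\sin(\pi a b/p)}{\sin(\pi a/p)}$ for $1\leq a,b\leq p-1$ is invertible. -/

import Mathlib

/-!
Since `sin ((b + 1) θ) = U_b (cos θ) · sin θ` for the Chebyshev polynomials of the second kind,
the matrix is `(U_b (x_a))_{a,b}` with `x_a = cos (π (a + 1) / p)`. As `U_b` has degree `b` and
leading coefficient `2 ^ b`, column operations reduce it to the Vandermonde matrix of the `x_a`,
which are distinct because `cos` is injective on `[0, π]`.
-/

open Real Polynomial Polynomial.Chebyshev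

namespace Matrix

theorem det_eval_matrixOfPolynomials_eq_det_vandermonde_mul_prod_leadingCoeff {R : Type*}
    [CommRing R] {n : ℕ} (v : Fin n → R) (p : Fin n → R[X]) (h_deg : ∀ i, (p i).natDegree = i) :
    (of fun i j => (p j).eval (v i)).det = (vandermonde v).det * ∏ i, (p i).leadingCoeff := by
  rw [eval_matrixOfPolynomials_eq_vandermonde_mul_matrixOfPolynomials v p (fun i => (h_deg i).le),
    det_mul, det_of_isUpperTriangular
      (matrixOfPolynomials_blockTriangular p (fun i => (h_deg i).le))]
  congr 1
  refine Finset.prod_congr rfl fun i _ => ?_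
  rw [of_apply, leadingCoeff, h_deg]

theorem isUnit_of_eval_polynomials {K : Type*} [Field K] {n : ℕ} {v : Fin n → K}
    (hv : Function.Injective v) {p : Fin n → K[X]} (h_deg : ∀ i, (p i).natDegree = i)
    (h_lead : ∀ i, (p i).leadingCoeff ≠ 0) :
    IsUnit (of fun i j => (p j).eval (v i)) := by
  rw [isUnit_iff_isUnit_det, isUnit_iff_ne_zero,
    det_eval_matrixOfPolynomials_eq_det_vandermonde_mul_prod_leadingCoeff v p h_deg]
  exact mul_ne_zero (det_vandermonde_ne_zero_iff.mpr hv)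
    (Finset.prod_ne_zero_iff.mpr fun i _ => h_lead i)

end Matrix

theorem Polynomial.Chebyshev.sin_mul_div_sin_eq_eval_U {θ : ℝ} (hθ : sin θ ≠ 0) (n : ℕ) :
    sin ((n + 1) * θ) / sin θ = (U ℝ n).eval (cos θ) := by
  have h := U_real_cos θ (n : ℤ)
  push_cast at h
  rw [div_eq_iff hθ, h]

theorem pi_mul_succ_div_mem_Ioo {p a : ℕ} (ha : a + 1 < p) :
    π * (a + 1) / p ∈ Set.Ioo 0 π := by
  have hp : (0 : ℝ) < p := by exact_mod_cast (by omega : 0 < p)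
  refine ⟨by positivity, ?_⟩
  rw [div_lt_iff₀ hp]
  exact mul_lt_mul_of_pos_left (by exact_mod_cast ha) pi_pos

theorem injective_cos_pi_mul_succ_div (p : ℕ) :
    Function.Injective fun a : Fin (p - 1) => cos (π * ((a : ℕ) + 1) / p) := by
  intro a b hab
  have hIcc (c : Fin (p - 1)) :=
    Set.Ioo_subset_Icc_self (pi_mul_succ_div_mem_Ioo (p := p) (a := c) (by omega))
  have hp : (p : ℝ) ≠ 0 := by have := a.isLt; exact_mod_cast (by omega : p ≠ 0)
  have h := injOn_cos (hIcc a) (hIcc b) hab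
  field_simp [pi_ne_zero] at h
  exact Fin.ext (by exact_mod_cast add_right_cancel h)

theorem stmt_1_general (p : ℕ) :
    IsUnit (Matrix.of fun a b : Fin (p - 1) =>
      Real.sin (Real.pi * ((a : ℕ) + 1) * ((b : ℕ) + 1) / p) /
        Real.sin (Real.pi * ((a : ℕ) + 1) / p)) := by
  have hM : (Matrix.of fun a b : Fin (p - 1) =>
      sin (π * ((a : ℕ) + 1) * ((b : ℕ) + 1) / p) / sin (π * ((a : ℕ) + 1) / p)) =
      Matrix.of fun a b : Fin (p - 1) => (U ℝ (b : ℕ)).eval (cos (π * ((a : ℕ) + 1) / p)) := by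
    ext a b
    have hsin := (sin_pos_of_mem_Ioo (pi_mul_succ_div_mem_Ioo (p := p) (a := a) (by omega))).ne'
    rw [Matrix.of_apply, Matrix.of_apply, ← sin_mul_div_sin_eq_eval_U hsin]
    ring_nf
  rw [hM]
  exact Matrix.isUnit_of_eval_polynomials (injective_cos_pi_mul_succ_div p)
    (fun b => natDegree_U_natCast ℝ _) (fun b => by rw [leadingCoeff_U_natCast]; positivity)

/-- The `(p-1) × (p-1)` matrix with entries `sin(π a b / p) / sin(π a / p)` is invertible. -/
theorem stmt_1 (p : ℕ) (hp : 2 ≤ p) :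
    IsUnit (Matrix.of fun a b : Fin (p - 1) =>
      Real.sin (Real.pi * ((a : ℕ) + 1) * ((b : ℕ) + 1) / p) /
        Real.sin (Real.pi * ((a : ℕ) + 1) / p)) :=
  stmt_1_general p
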